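/- arXiv:2503.11042 — 2 statements merged into one kernel-verified Lean document; each statement's English description precedes it below -/
import Mathlib

section
/- Let P ⊆ ℝ^m_{≥0} be a nonempty Borel-fixed compact convex set with widths w_i(P) := sup{a_i : a ∈ P}. Then w_1(P) ≤ w_2(P) ≤ … ≤ w_m(P), and Δ(w_1(P),…,w_m(P)) ⊆ P ⊆ ∇(w_1(P),…,w_m(P)). -/
/-- The elementary Borel move on `ℝ^m`: for `i < m` it sends `(a₁,…,a_m)` to
`(a₁,…,a_{i-1}, 0, a_i + a_{i+1}, a_{i+2},…,a_m)`, and for the last index it sends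
`(a₁,…,a_m)` to `(a₁,…,a_{m-1}, 0)`. -/
def borelMove (m : ℕ) (i : Fin m) (a : Fin m → ℝ) : Fin m → ℝ :=
  if h : (i : ℕ) + 1 < m then
    Function.update (Function.update a i 0) ⟨(i : ℕ) + 1, h⟩ (a i + a ⟨(i : ℕ) + 1, h⟩)
  else Function.update a i 0

/-- A set `P ⊆ ℝ^m_{≥0}` is Borel-fixed if it is stable under all elementary Borel moves:
`(a₁,…,a_m) ∈ P` implies `(a₁,…,a_{i-1},0,a_i+a_{i+1},a_{i+2},…,a_m) ∈ P` for `i ≤ m-1`,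
and `(a₁,…,a_{m-1},0) ∈ P`. -/
def BorelFixedPt (m : ℕ) (P : Set (Fin m → ℝ)) : Prop :=
  ∀ a ∈ P, ∀ i : Fin m, borelMove m i a ∈ P

/-- The simplex `Δ(t₁,…,t_m) ⊆ ℝ^m`: convex hull of `0` and the points `tᵢ·eᵢ`. -/
def simplexSet (m : ℕ) (t : Fin m → ℝ) : Set (Fin m → ℝ) :=
  convexHull ℝ (insert (0 : Fin m → ℝ) {x | ∃ i : Fin m, x = Pi.single i (t i)})

/-- The polytope `∇(t₁,…,t_m) := {ν ∈ ℝ^m_{≥0} : ν₁ + … + νᵢ ≤ tᵢ for all i}`. -/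
def nablaSet (m : ℕ) (t : Fin m → ℝ) : Set (Fin m → ℝ) :=
  {ν | (∀ i, 0 ≤ ν i) ∧ ∀ i : Fin m, ∑ j ∈ Finset.Iic i, ν j ≤ t i}

lemma borelMove_apply_self (m : ℕ) (i : Fin m) (a : Fin m → ℝ) :
    borelMove m i a i = 0 := by
  unfold borelMove
  split
  · next h =>
    rw [Function.update_of_ne (by simp [Fin.ext_iff]), Function.update_self]
  · rw [Function.update_self]

lemma borelMove_apply_succ (m : ℕ) (i : Fin m) (h : (i : ℕ) + 1 < m) (a : Fin m → ℝ) :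
    borelMove m i a ⟨(i : ℕ) + 1, h⟩ = a i + a ⟨(i : ℕ) + 1, h⟩ := by
  unfold borelMove
  rw [dif_pos h, Function.update_self]

lemma borelMove_apply_other (m : ℕ) (i : Fin m) (a : Fin m → ℝ) (j : Fin m)
    (hj : (j : ℕ) ≠ i) (hj' : (j : ℕ) ≠ (i : ℕ) + 1) : borelMove m i a j = a j := by
  unfold borelMove
  split
  · rw [Function.update_of_ne (by simp [Fin.ext_iff, hj']),
      Function.update_of_ne (by simp [Fin.ext_iff, hj])]
  · rw [Function.update_of_ne (by simp [Fin.ext_iff, hj])]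

/-- Push the prefix sum into coordinate `i`. -/
lemma exists_push (m : ℕ) (P : Set (Fin m → ℝ)) (hB : BorelFixedPt m P) (i : Fin m)
    (a : Fin m → ℝ) (ha : a ∈ P) :
    ∃ b ∈ P, b i = ∑ j ∈ Finset.Iic i, a j ∧ (∀ j, j < i → b j = 0) ∧
      (∀ j, i < j → b j = a j) := by
  obtain ⟨n, hn⟩ := i
  induction n with
  | zero =>
    refine ⟨a, ha, ?_, ?_, fun j _ => rfl⟩
    · have : Finset.Iic (⟨0, hn⟩ : Fin m) = {⟨0, hn⟩} := by
        ext j; simp [Finset.mem_Iic, Fin.le_def, Fin.ext_iff, Nat.le_zero]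
      rw [this, Finset.sum_singleton]
    · intro j hj; exact absurd hj (by simp [Fin.lt_def])
  | succ n ih =>
    have hn' : n < m := by omega
    obtain ⟨b, hbP, hb1, hb2, hb3⟩ := ih hn'
    refine ⟨borelMove m ⟨n, hn'⟩ b, hB b hbP _, ?_, ?_, ?_⟩
    · have hs : borelMove m ⟨n, hn'⟩ b ⟨n + 1, hn⟩ = b ⟨n, hn'⟩ + b ⟨n + 1, hn⟩ :=
        borelMove_apply_succ m ⟨n, hn'⟩ hn b
      have hins : Finset.Iic (⟨n + 1, hn⟩ : Fin m)
          = insert (⟨n + 1, hn⟩ : Fin m) (Finset.Iic (⟨n, hn'⟩ : Fin m)) := by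
        ext j; simp [Finset.mem_Iic, Fin.le_def, Fin.ext_iff]; omega
      rw [hs, hb1, hb3 ⟨n + 1, hn⟩ (by simp [Fin.lt_def]), hins,
        Finset.sum_insert (by simp [Finset.mem_Iic, Fin.le_def])]
      ring
    · intro j hj
      rcases eq_or_ne (j : ℕ) n with h | h
      · have : j = ⟨n, hn'⟩ := Fin.ext h
        rw [this]; exact borelMove_apply_self m _ b
      · rw [borelMove_apply_other m ⟨n, hn'⟩ b j (by simpa using h)
          (by simp only [Fin.lt_def, Fin.val_mk] at hj; simpa using by omega)]
        exact hb2 j (by simp only [Fin.lt_def, Fin.val_mk] at hj ⊢; omega)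
    · intro j hj
      simp only [Fin.lt_def] at hj
      rw [borelMove_apply_other m ⟨n, hn'⟩ b j (by simp only [Fin.val_mk]; omega)
        (by simp only [Fin.val_mk]; omega)]
      exact hb3 j (by simp only [Fin.lt_def, Fin.val_mk]; omega)

/-- Zero out the tail after coordinate `i`. -/
lemma exists_zero_tail (m : ℕ) (P : Set (Fin m → ℝ)) (hB : BorelFixedPt m P) (i : Fin m)
    (a : Fin m → ℝ) (ha : a ∈ P) :
    ∃ c ∈ P, (∀ j, j ≤ i → c j = a j) ∧ (∀ j, i < j → c j = 0) := by
  obtain ⟨k, hk⟩ : ∃ k, m - 1 - (i : ℕ) = k := ⟨_, rfl⟩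
  induction k generalizing i a with
  | zero =>
    refine ⟨a, ha, fun j _ => rfl, fun j hj => ?_⟩
    exact absurd hj (by have h1 := j.isLt; have h2 := i.isLt; simp only [Fin.lt_def]; omega)
  | succ k ih =>
    have h1 : (i : ℕ) + 1 < m := by have := i.isLt; omega
    have ha' : borelMove m ⟨(i : ℕ) + 1, h1⟩ a ∈ P := hB a ha _
    obtain ⟨c, hcP, hc1, hc2⟩ := ih ⟨(i : ℕ) + 1, h1⟩ (borelMove m ⟨(i : ℕ) + 1, h1⟩ a) ha'
      (by simp only [Fin.val_mk]; omega)
    refine ⟨c, hcP, ?_, ?_⟩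
    · intro j hj
      simp only [Fin.le_def] at hj
      rw [hc1 j (by simp only [Fin.le_def, Fin.val_mk]; omega)]
      exact borelMove_apply_other m _ a j (by simp only [Fin.val_mk]; omega)
        (by simp only [Fin.val_mk]; omega)
    · intro j hj
      simp only [Fin.lt_def] at hj
      rcases eq_or_ne (j : ℕ) ((i : ℕ) + 1) with h | h
      · have hje : j = ⟨(i : ℕ) + 1, h1⟩ := Fin.ext h
        rw [hje, hc1 _ le_rfl]
        exact borelMove_apply_self m _ a
      · exact hc2 j (by simp only [Fin.lt_def, Fin.val_mk]; omega)

/-- For a nonempty Borel-fixed compact convex set `P ⊆ ℝ^m_{≥0}` with widths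
`wᵢ(P) = sup{aᵢ : a ∈ P}`, the widths are nondecreasing and
`Δ(w₁(P),…,w_m(P)) ⊆ P ⊆ ∇(w₁(P),…,w_m(P))`. -/
theorem borelFixed_polytopal_bounds (m : ℕ) (P : Set (Fin m → ℝ)) (hne : P.Nonempty)
    (hP : P ⊆ {x | ∀ k, 0 ≤ x k}) (hc : IsCompact P) (hconv : Convex ℝ P)
    (hB : BorelFixedPt m P)
    (w : Fin m → ℝ) (hw : ∀ i, IsLUB ((fun a => a i) '' P) (w i)) :
    (∀ i j : Fin m, i ≤ j → w i ≤ w j) ∧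
    simplexSet m w ⊆ P ∧ P ⊆ nablaSet m w := by
  -- upper bound property
  have hub : ∀ i : Fin m, ∀ a ∈ P, a i ≤ w i := fun i a ha => (hw i).1 ⟨a, ha, rfl⟩
  -- widths are attained
  have hattain : ∀ i : Fin m, ∃ a ∈ P, a i = w i := by
    intro i
    obtain ⟨a, haP, hmax⟩ := hc.exists_isMaxOn hne (continuous_apply i).continuousOn
    refine ⟨a, haP, ?_⟩
    have : IsLUB ((fun a => a i) '' P) (a i) := by
      constructor
      · rintro x ⟨y, hy, rfl⟩; exact hmax hy
      · intro x hx; exact hx ⟨a, haP, rfl⟩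
    exact this.unique (hw i)
  refine ⟨?_, ?_, ?_⟩
  · -- monotonicity
    intro i j hij
    obtain ⟨a, haP, hai⟩ := hattain i
    obtain ⟨b, hbP, hb1, _, _⟩ := exists_push m P hB j a haP
    calc w i = a i := hai.symm
      _ ≤ ∑ k ∈ Finset.Iic j, a k :=
          Finset.single_le_sum (fun k _ => hP haP k) (Finset.mem_Iic.2 hij)
      _ = b j := hb1.symm
      _ ≤ w j := hub j b hbP
  · -- Δ ⊆ P
    refine convexHull_min ?_ hconv
    rintro x (rfl | ⟨i, rfl⟩)
    · -- 0 ∈ P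
      obtain ⟨a, haP⟩ := hne
      rcases Nat.eq_zero_or_pos m with hm | hm
      · subst hm
        have : (0 : Fin 0 → ℝ) = a := funext fun j => j.elim0
        rwa [this]
      · have hlast : m - 1 < m := by omega
        obtain ⟨b, hbP, _, hb2, _⟩ := exists_push m P hB ⟨m - 1, hlast⟩ a haP
        have hz : borelMove m ⟨m - 1, hlast⟩ b ∈ P := hB b hbP _
        have he : borelMove m ⟨m - 1, hlast⟩ b = 0 := by
          funext j
          rcases eq_or_ne (j : ℕ) (m - 1) with h | h
          · have : j = ⟨m - 1, hlast⟩ := Fin.ext h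
            rw [this]; exact borelMove_apply_self m _ b
          · rw [borelMove_apply_other m _ b j (by simp only [Fin.val_mk]; omega)
              (by simp only [Fin.val_mk]; have := j.isLt; omega)]
            exact hb2 j (by simp only [Fin.lt_def, Fin.val_mk]; have := j.isLt; omega)
        rwa [he] at hz
    · -- Pi.single i (w i) ∈ P
      obtain ⟨a, haP, hai⟩ := hattain i
      obtain ⟨c, hcP, hc1, hc2⟩ := exists_zero_tail m P hB i a haP
      obtain ⟨d, hdP, hd1, hd2, hd3⟩ := exists_push m P hB i c hcP
      have hdi_ge : w i ≤ d i := by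
        rw [hd1, ← hai, ← hc1 i le_rfl]
        exact Finset.single_le_sum (fun k _ => hP hcP k) (Finset.mem_Iic.2 le_rfl)
      have hdi : d i = w i := le_antisymm (hub i d hdP) hdi_ge
      have : Pi.single i (w i) = d := by
        funext j
        rcases lt_trichotomy j i with h | h | h
        · rw [Pi.single_apply, if_neg (by exact fun hji => absurd hji.symm h.ne'), hd2 j h]
        · rw [h, Pi.single_apply, if_pos rfl, hdi]
        · rw [Pi.single_apply, if_neg h.ne', hd3 j h, hc2 j h]
      rwa [this]
  · -- P ⊆ ∇
    intro a ha
    refine ⟨fun k => hP ha k, fun i => ?_⟩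
    obtain ⟨b, hbP, hb1, _, _⟩ := exists_push m P hB i a ha
    rw [← hb1]
    exact hub i b hbP
end

section
/- In ℝ^3, the convex hull P of Δ(1,2,3) ∪ {(1,1,1)} satisfies Δ(1,2,3) ⊆ P ⊆ ∇(1,2,3), yet P is not Borel-fixed: indeed (1,1,1) ∈ P but (1,0,2) ∉ P. -/
/-! The functional `ν ↦ 2ν₁ + ν₃` is at most `3` on `0`, `e₁`, `2e₂`, `3e₃` and `(1,1,1)`, hence on
their convex hull `P`, but it takes the value `4` at `(1,0,2)`; and `(1,0,2)` is the Borel move of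
`(1,1,1) ∈ P` at the second coordinate. `P ⊆ ∇` holds because `∇(t)` is convex, contains
`(1,1,1)`, and contains every vertex `tᵢeᵢ` as soon as `t` is nonnegative and monotone. -/

section Polytopes

variable {m : ℕ} {t : Fin m → ℝ}

theorem convex_nablaSet (t : Fin m → ℝ) : Convex ℝ (nablaSet m t) := by
  intro x hx y hy a b ha hb hab
  refine ⟨fun i => ?_, fun i => ?_⟩
  · simp only [Pi.add_apply, Pi.smul_apply, smul_eq_mul]
    exact add_nonneg (mul_nonneg ha (hx.1 i)) (mul_nonneg hb (hy.1 i))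
  · simp only [Pi.add_apply, Pi.smul_apply, smul_eq_mul]
    rw [Finset.sum_add_distrib, ← Finset.mul_sum, ← Finset.mul_sum]
    calc a * ∑ j ∈ Finset.Iic i, x j + b * ∑ j ∈ Finset.Iic i, y j
        ≤ a * t i + b * t i := by gcongr; exacts [hx.2 i, hy.2 i]
      _ = t i := by rw [← add_mul, hab, one_mul]

theorem zero_mem_nablaSet (ht : 0 ≤ t) : (0 : Fin m → ℝ) ∈ nablaSet m t :=
  ⟨fun _ => le_rfl, fun i => by simpa using ht i⟩

theorem single_mem_nablaSet (ht : 0 ≤ t) (hmono : Monotone t) (i : Fin m) :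
    Pi.single i (t i) ∈ nablaSet m t := by
  refine ⟨fun j => ?_, fun j => ?_⟩
  · rcases eq_or_ne j i with rfl | hji
    · simpa using ht j
    · simp [hji]
  · rw [Finset.sum_pi_single']
    split_ifs with hij
    · exact hmono (Finset.mem_Iic.mp hij)
    · exact ht j

theorem one_mem_nablaSet (ht : ∀ i : Fin m, (i : ℝ) + 1 ≤ t i) : (1 : Fin m → ℝ) ∈ nablaSet m t :=
  ⟨fun _ => zero_le_one, fun i => by simpa using ht i⟩

theorem convexHull_simplexSet_union_subset {C : Set (Fin m → ℝ)} {p : Fin m → ℝ}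
    (hC : Convex ℝ C) (h0 : 0 ∈ C) (hsingle : ∀ i, Pi.single i (t i) ∈ C) (hp : p ∈ C) :
    convexHull ℝ (simplexSet m t ∪ {p}) ⊆ C := by
  refine convexHull_min (Set.union_subset (convexHull_min ?_ hC) (Set.singleton_subset_iff.2 hp)) hC
  rintro x (rfl | ⟨i, rfl⟩)
  exacts [h0, hsingle i]

end Polytopes

theorem borelMove_one_one_one : borelMove 3 1 ![1, 1, 1] = ![1, 0, 2] := by
  funext j
  fin_cases j <;> norm_num [borelMove, Function.update]

theorem one_zero_two_notMem_convexHull :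
    (![1, 0, 2] : Fin 3 → ℝ) ∉ convexHull ℝ (simplexSet 3 ![1, 2, 3] ∪ {![1, 1, 1]}) := by
  have hlin : IsLinearMap ℝ fun x : Fin 3 → ℝ => 2 * x 0 + x 2 := by
    constructor <;> intros <;> simp only [Pi.add_apply, Pi.smul_apply, smul_eq_mul] <;> ring
  intro h
  have := convexHull_simplexSet_union_subset (convex_halfSpace_le hlin 3) (by simp)
    (fun i => by fin_cases i <;> norm_num [Pi.single_apply, Fin.ext_iff])
    (by norm_num [Matrix.cons_val_two]) h
  norm_num [Matrix.cons_val_two] at this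

/-- In `ℝ³`, the convex hull `P` of `Δ(1,2,3) ∪ {(1,1,1)}` satisfies
`Δ(1,2,3) ⊆ P ⊆ ∇(1,2,3)`, yet `P` is not Borel-fixed: `(1,1,1) ∈ P` but `(1,0,2) ∉ P`. -/
theorem not_borelFixed_example :
    simplexSet 3 ![1, 2, 3] ⊆ convexHull ℝ (simplexSet 3 ![1, 2, 3] ∪ {![1, 1, 1]}) ∧
    convexHull ℝ (simplexSet 3 ![1, 2, 3] ∪ {![1, 1, 1]}) ⊆ nablaSet 3 ![1, 2, 3] ∧
    (![1, 1, 1] : Fin 3 → ℝ) ∈ convexHull ℝ (simplexSet 3 ![1, 2, 3] ∪ {![1, 1, 1]}) ∧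
    (![1, 0, 2] : Fin 3 → ℝ) ∉ convexHull ℝ (simplexSet 3 ![1, 2, 3] ∪ {![1, 1, 1]}) ∧
    ¬ BorelFixedPt 3 (convexHull ℝ (simplexSet 3 ![1, 2, 3] ∪ {![1, 1, 1]})) := by
  have ht : (0 : Fin 3 → ℝ) ≤ ![1, 2, 3] := fun i => by fin_cases i <;> norm_num
  have hmono : Monotone (![1, 2, 3] : Fin 3 → ℝ) :=
    Fin.monotone_iff_le_succ.2 fun i => by fin_cases i <;> norm_num [Matrix.cons_val_two]
  have hone : (![1, 1, 1] : Fin 3 → ℝ) = 1 := by ext i; fin_cases i <;> rfl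
  have hmem : (![1, 1, 1] : Fin 3 → ℝ) ∈ convexHull ℝ (simplexSet 3 ![1, 2, 3] ∪ {![1, 1, 1]}) :=
    subset_convexHull ℝ _ (Set.mem_union_right _ rfl)
  refine ⟨Set.subset_union_left.trans (subset_convexHull ℝ _),
    convexHull_simplexSet_union_subset (convex_nablaSet _) (zero_mem_nablaSet ht)
      (single_mem_nablaSet ht hmono)
      (hone ▸ one_mem_nablaSet fun i => by fin_cases i <;> norm_num),
    hmem, one_zero_two_notMem_convexHull, fun hB => one_zero_two_notMem_convexHull ?_⟩
  simpa [borelMove_one_one_one] using hB _ hmem 1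
end
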